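/- arXiv:1711.02118 — 2 statements merged into one kernel-verified Lean document; each statement's English description precedes it below -/
import Mathlib

section
/- Let θ₁, θ₂ be functions from the set of primes to [0, π] whose pairs are equidistributed with respect to the 2-product Sato-Tate measure, i.e. for all subintervals I₁, I₂ ⊆ [0, π], lim_{x→∞} #{p prime, p ≤ x : (θ₁(p), θ₂(p)) ∈ I₁ × I₂} / #{p prime, p ≤ x} = (4/π²)·∫_{I₁}∫_{I₂} sin²(t₁) sin²(t₂) dt₂ dt₁. Let ν be a positive odd integer. Then the set of primes p with sin((ν+1)θ₁(p))·sin((ν+1)θ₂(p)) < 0 has natural density 1/2, i.e. lim_{x→∞} #{p prime, p ≤ x : sin((ν+1)θ₁(p))·sin((ν+1)θ₂(p)) < 0} / #{p prime, p ≤ x} = 1/2. -/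
/-!
Put `n = ν + 1`, which is even. The zeros `jπ/n` of `sin (nθ)` cut `[0, π]` into arcs `I_j`,
`j < n`, and `sin (nθ)` has sign `(-1)^j` on the interior of `I_j`. So the product of the two
sines is negative exactly on the open rectangles `I_j × I_k` with `j + k` odd. The boundary of a
rectangle lies in four degenerate rectangles, hence has density `0`, so each open rectangle has
density `μ(I_j) μ(I_k)`, where `μ` is the Sato–Tate measure `(2/π) sin² t dt`. Summing over
`j + k` odd gives `((∑ μ(I_j))² - (∑ (-1)^j μ(I_j))²) / 2`. The first sum is `μ[0, π] = 1`, and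
the alternating sum vanishes because `θ ↦ π - θ` preserves `μ` and sends `I_j` to `I_{n-1-j}`,
of the other parity since `n` is even. Hence the density is `1/2`.
-/

open Real Filter Topology MeasureTheory intervalIntegral

noncomputable def primeRatio (S : ℕ → Prop) (x : ℕ) : ℝ :=
  (Nat.card {p : ℕ | p ≤ x ∧ p.Prime ∧ S p} : ℝ) / (Nat.card {p : ℕ | p ≤ x ∧ p.Prime} : ℝ)

def HasPrimeDensity (S : ℕ → Prop) (d : ℝ) : Prop :=
  Tendsto (primeRatio S) atTop (𝓝 d)

section PrimeRatio

variable {S T : ℕ → Prop}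

lemma finite_setOf_le_prime_and (S : ℕ → Prop) (x : ℕ) : {p : ℕ | p ≤ x ∧ p.Prime ∧ S p}.Finite :=
  (Set.finite_Iic x).subset fun _ hp => hp.1

lemma setOf_le_prime_or (x : ℕ) :
    {p : ℕ | p ≤ x ∧ p.Prime ∧ (S p ∨ T p)} =
      {p : ℕ | p ≤ x ∧ p.Prime ∧ S p} ∪ {p : ℕ | p ≤ x ∧ p.Prime ∧ T p} := by
  ext p; simp only [Set.mem_ofPred_eq, Set.mem_union]; tauto

lemma primeRatio_nonneg (x : ℕ) : 0 ≤ primeRatio S x := by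
  unfold primeRatio; positivity

lemma primeRatio_mono (h : ∀ p, p.Prime → S p → T p) (x : ℕ) :
    primeRatio S x ≤ primeRatio T x := by
  unfold primeRatio
  gcongr
  exact Nat.card_mono (finite_setOf_le_prime_and T x) fun p ⟨hx, hp, hS⟩ => ⟨hx, hp, h p hp hS⟩

lemma primeRatio_or_le (x : ℕ) :
    primeRatio (fun p => S p ∨ T p) x ≤ primeRatio S x + primeRatio T x := by
  unfold primeRatio
  rw [← add_div]
  gcongr
  simp only [setOf_le_prime_or, Nat.card_coe_set_eq]
  exact_mod_cast Set.ncard_union_le _ _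

lemma primeRatio_or_of_disjoint (h : ∀ p, p.Prime → S p → ¬ T p) (x : ℕ) :
    primeRatio (fun p => S p ∨ T p) x = primeRatio S x + primeRatio T x := by
  unfold primeRatio
  rw [← add_div]
  have hdisj : Disjoint {p : ℕ | p ≤ x ∧ p.Prime ∧ S p} {p : ℕ | p ≤ x ∧ p.Prime ∧ T p} :=
    Set.disjoint_left.mpr fun p ⟨_, hp, hS⟩ ⟨_, _, hT⟩ => h p hp hS hT
  simp only [setOf_le_prime_or, Nat.card_coe_set_eq]
  rw [Set.ncard_union_eq hdisj (finite_setOf_le_prime_and S x) (finite_setOf_le_prime_and T x)]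
  push_cast; rfl

end PrimeRatio

namespace HasPrimeDensity

variable {S T N : ℕ → Prop} {a b d : ℝ}

lemma congr (h : ∀ p, p.Prime → (S p ↔ T p)) (hS : HasPrimeDensity S d) :
    HasPrimeDensity T d := by
  refine Tendsto.congr (fun x => le_antisymm ?_ ?_) hS
  · exact primeRatio_mono (fun p hp => (h p hp).1) x
  · exact primeRatio_mono (fun p hp => (h p hp).2) x

lemma or (h : ∀ p, p.Prime → S p → ¬ T p) (hS : HasPrimeDensity S a) (hT : HasPrimeDensity T b) :
    HasPrimeDensity (fun p => S p ∨ T p) (a + b) :=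
  Tendsto.congr (fun x => (primeRatio_or_of_disjoint h x).symm) (hS.add hT)

lemma or_zero (hS : HasPrimeDensity S 0) (hT : HasPrimeDensity T 0) :
    HasPrimeDensity (fun p => S p ∨ T p) 0 := by
  refine tendsto_of_tendsto_of_tendsto_of_le_of_le tendsto_const_nhds
    (by simpa using hS.add hT) primeRatio_nonneg primeRatio_or_le

lemma of_imp_of_imp_or_zero (hST : ∀ p, p.Prime → S p → T p)
    (hTS : ∀ p, p.Prime → T p → S p ∨ N p) (hT : HasPrimeDensity T d)
    (hN : HasPrimeDensity N 0) : HasPrimeDensity S d := by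
  refine tendsto_of_tendsto_of_tendsto_of_le_of_le (by simpa using hT.sub hN) hT
    (fun x => ?_) (primeRatio_mono hST)
  have := (primeRatio_mono hTS x).trans (primeRatio_or_le x)
  simp only [tsub_le_iff_right]
  linarith

lemma exists_mem_finset {ι : Type*} [DecidableEq ι] {s : Finset ι} {S : ι → ℕ → Prop} {d : ι → ℝ}
    (hdisj : ∀ i ∈ s, ∀ j ∈ s, i ≠ j → ∀ p, p.Prime → S i p → ¬ S j p)
    (hS : ∀ i ∈ s, HasPrimeDensity (S i) (d i)) :
    HasPrimeDensity (fun p => ∃ i ∈ s, S i p) (∑ i ∈ s, d i) := by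
  induction s using Finset.induction_on with
  | empty =>
    refine tendsto_const_nhds.congr fun x => ?_
    simp [primeRatio]
  | insert i s hi ih =>
    rw [Finset.sum_insert hi]
    have hrest := ih (fun j hj k hk => hdisj j (by simp [hj]) k (by simp [hk]))
      (fun j hj => hS j (by simp [hj]))
    refine ((hS i (by simp)).or ?_ hrest).congr fun p _ => by simp
    rintro p hp hi' ⟨j, hj, hj'⟩
    exact hdisj i (by simp) j (by simp [hj]) (by rintro rfl; exact hi hj) p hp hi' hj'

end HasPrimeDensity

noncomputable def satoTate (a b : ℝ) : ℝ := 2 / π * ∫ t in a..b, sin t ^ 2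

lemma satoTate_self (a : ℝ) : satoTate a a = 0 := by
  simp [satoTate]

lemma satoTate_zero_pi : satoTate 0 π = 1 := by
  simp only [satoTate, integral_sin_sq, sin_zero, sin_pi]
  field_simp
  ring

lemma satoTate_pi_sub (a b : ℝ) : satoTate (π - b) (π - a) = satoTate a b := by
  simp only [satoTate, ← integral_comp_sub_left (fun t => sin t ^ 2) π, sin_pi_sub]

lemma sum_satoTate_adjacent (c : ℕ → ℝ) (n : ℕ) :
    ∑ j ∈ Finset.range n, satoTate (c j) (c (j + 1)) = satoTate (c 0) (c n) := by
  have hint : ∀ k < n, IntervalIntegrable (fun t => sin t ^ 2) volume (c k) (c (k + 1)) :=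
    fun _ _ => (continuous_sin.pow 2).intervalIntegrable _ _
  rw [satoTate, ← sum_integral_adjacent_intervals hint, Finset.mul_sum]
  rfl

lemma setIntegral_Icc_Icc_sin_sq_mul_sin_sq {a₁ b₁ a₂ b₂ : ℝ} (h₁ : a₁ ≤ b₁) (h₂ : a₂ ≤ b₂) :
    (4 / π ^ 2) * ∫ t₁ in Set.Icc a₁ b₁, ∫ t₂ in Set.Icc a₂ b₂, sin t₁ ^ 2 * sin t₂ ^ 2
      = satoTate a₁ b₁ * satoTate a₂ b₂ := by
  simp only [MeasureTheory.integral_const_mul, MeasureTheory.integral_mul_const,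
    integral_Icc_eq_integral_Ioc, ← integral_of_le h₁, ← integral_of_le h₂, satoTate]
  ring

def IsPairSatoTate (θ₁ θ₂ : ℕ → ℝ) : Prop :=
  ∀ a₁ b₁ a₂ b₂ : ℝ, 0 ≤ a₁ → a₁ ≤ b₁ → b₁ ≤ π → 0 ≤ a₂ → a₂ ≤ b₂ → b₂ ≤ π →
    HasPrimeDensity (fun p => θ₁ p ∈ Set.Icc a₁ b₁ ∧ θ₂ p ∈ Set.Icc a₂ b₂)
      ((4 / π ^ 2) * ∫ t₁ in Set.Icc a₁ b₁, ∫ t₂ in Set.Icc a₂ b₂, sin t₁ ^ 2 * sin t₂ ^ 2)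

namespace IsPairSatoTate

variable {θ₁ θ₂ : ℕ → ℝ} {a₁ b₁ a₂ b₂ c : ℝ}

lemma hasPrimeDensity_Icc (h : IsPairSatoTate θ₁ θ₂) (ha₁ : 0 ≤ a₁) (hab₁ : a₁ ≤ b₁)
    (hb₁ : b₁ ≤ π) (ha₂ : 0 ≤ a₂) (hab₂ : a₂ ≤ b₂) (hb₂ : b₂ ≤ π) :
    HasPrimeDensity (fun p => θ₁ p ∈ Set.Icc a₁ b₁ ∧ θ₂ p ∈ Set.Icc a₂ b₂)
      (satoTate a₁ b₁ * satoTate a₂ b₂) := by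
  rw [← setIntegral_Icc_Icc_sin_sq_mul_sin_sq hab₁ hab₂]
  exact h a₁ b₁ a₂ b₂ ha₁ hab₁ hb₁ ha₂ hab₂ hb₂

lemma hasPrimeDensity_fst_eq (h : IsPairSatoTate θ₁ θ₂)
    (hθ₂ : ∀ p : ℕ, p.Prime → θ₂ p ∈ Set.Icc 0 π) (hc₀ : 0 ≤ c) (hcπ : c ≤ π) :
    HasPrimeDensity (fun p => θ₁ p = c) 0 := by
  have := h.hasPrimeDensity_Icc hc₀ le_rfl hcπ le_rfl pi_pos.le le_rfl
  rw [satoTate_self, zero_mul] at this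
  exact this.congr fun p hp => by simp [hθ₂ p hp, le_antisymm_iff, and_comm]

lemma hasPrimeDensity_snd_eq (h : IsPairSatoTate θ₁ θ₂)
    (hθ₁ : ∀ p : ℕ, p.Prime → θ₁ p ∈ Set.Icc 0 π) (hc₀ : 0 ≤ c) (hcπ : c ≤ π) :
    HasPrimeDensity (fun p => θ₂ p = c) 0 := by
  have := h.hasPrimeDensity_Icc le_rfl pi_pos.le le_rfl hc₀ le_rfl hcπ
  rw [satoTate_self, mul_zero] at this
  exact this.congr fun p hp => by simp [hθ₁ p hp, le_antisymm_iff, and_comm]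

lemma hasPrimeDensity_Ioo (h : IsPairSatoTate θ₁ θ₂)
    (hθ₁ : ∀ p : ℕ, p.Prime → θ₁ p ∈ Set.Icc 0 π) (hθ₂ : ∀ p : ℕ, p.Prime → θ₂ p ∈ Set.Icc 0 π)
    (ha₁ : 0 ≤ a₁) (hab₁ : a₁ ≤ b₁) (hb₁ : b₁ ≤ π) (ha₂ : 0 ≤ a₂) (hab₂ : a₂ ≤ b₂) (hb₂ : b₂ ≤ π) :
    HasPrimeDensity (fun p => θ₁ p ∈ Set.Ioo a₁ b₁ ∧ θ₂ p ∈ Set.Ioo a₂ b₂)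
      (satoTate a₁ b₁ * satoTate a₂ b₂) := by
  have hboundary := ((h.hasPrimeDensity_fst_eq hθ₂ ha₁ (hab₁.trans hb₁)).or_zero
    (h.hasPrimeDensity_fst_eq hθ₂ (ha₁.trans hab₁) hb₁)).or_zero
    ((h.hasPrimeDensity_snd_eq hθ₁ ha₂ (hab₂.trans hb₂)).or_zero
    (h.hasPrimeDensity_snd_eq hθ₁ (ha₂.trans hab₂) hb₂))
  refine HasPrimeDensity.of_imp_of_imp_or_zero (fun p _ hp => ?_) (fun p _ hp => ?_)
    (h.hasPrimeDensity_Icc ha₁ hab₁ hb₁ ha₂ hab₂ hb₂) hboundary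
  · exact ⟨Set.Ioo_subset_Icc_self hp.1, Set.Ioo_subset_Icc_self hp.2⟩
  · rcases Set.eq_endpoints_or_mem_Ioo_of_mem_Icc hp.1 with h₁ | h₁ | h₁ <;>
      rcases Set.eq_endpoints_or_mem_Ioo_of_mem_Icc hp.2 with h₂ | h₂ | h₂ <;> simp [*]

end IsPairSatoTate

noncomputable def sinNode (n j : ℕ) : ℝ := j * π / n

section SinNode

variable {n j k : ℕ} {θ : ℝ}

lemma sinNode_nonneg (n j : ℕ) : 0 ≤ sinNode n j := by
  unfold sinNode; positivity

lemma sinNode_mono (n : ℕ) : Monotone (sinNode n) := fun _ _ h => by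
  unfold sinNode; gcongr

lemma sinNode_le_pi (hj : j ≤ n) : sinNode n j ≤ π := by
  rcases n.eq_zero_or_pos with rfl | hn
  · simp [sinNode, pi_nonneg]
  rw [sinNode, div_le_iff₀ (by positivity), mul_comm]
  gcongr

lemma sinNode_self (hn : n ≠ 0) : sinNode n n = π := by
  unfold sinNode; field_simp

lemma pi_sub_sinNode (hn : 0 < n) (hj : j ≤ n) : π - sinNode n j = sinNode n (n - j) := by
  simp only [sinNode, Nat.cast_sub hj]
  field_simp

lemma satoTate_sinNode_reflect (hj : j < n) :
    satoTate (sinNode n (n - 1 - j)) (sinNode n (n - 1 - j + 1)) =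
      satoTate (sinNode n j) (sinNode n (j + 1)) := by
  rw [← satoTate_pi_sub, pi_sub_sinNode (by omega) (by omega), pi_sub_sinNode (by omega) (by omega)]
  congr 2 <;> omega

lemma mem_Ioo_sinNode_iff (hn : 0 < n) :
    θ ∈ Set.Ioo (sinNode n j) (sinNode n (j + 1)) ↔ j * π < n * θ ∧ n * θ - j * π < π := by
  have hn' : (0 : ℝ) < n := by exact_mod_cast hn
  simp only [Set.mem_Ioo, sinNode, div_lt_iff₀ hn', lt_div_iff₀ hn']
  push_cast
  constructor <;> rintro ⟨h₁, h₂⟩ <;> constructor <;> linarith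

lemma neg_one_pow_mul_sin_pos (hn : 0 < n) (hθ : θ ∈ Set.Ioo (sinNode n j) (sinNode n (j + 1))) :
    0 < (-1) ^ j * sin (n * θ) := by
  obtain ⟨hlo, hhi⟩ := (mem_Ioo_sinNode_iff hn).mp hθ
  rw [← sin_sub_nat_mul_pi]
  exact sin_pos_of_pos_of_lt_pi (by linarith) hhi

lemma exists_mem_Ioo_sinNode (hn : 0 < n) (hθ : θ ∈ Set.Icc 0 π) (hsin : sin (n * θ) ≠ 0) :
    ∃ j < n, θ ∈ Set.Ioo (sinNode n j) (sinNode n (j + 1)) := by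
  set j := ⌊n * θ / π⌋₊
  have hnθ : 0 ≤ n * θ / π := by have := hθ.1; positivity
  have hne : (j : ℝ) ≠ n * θ / π := by
    intro h
    apply hsin
    rw [eq_div_iff pi_ne_zero] at h
    rw [← h, sin_nat_mul_pi]
  have hlo : (j : ℝ) * π < n * θ := by
    rw [← lt_div_iff₀ pi_pos]; exact (Nat.floor_le hnθ).lt_of_ne hne
  have hhi : n * θ < (j + 1) * π := by
    rw [← div_lt_iff₀ pi_pos]; exact Nat.lt_floor_add_one _
  have hjn : j < n := by
    have : (j : ℝ) * π < n * π := hlo.trans_le (by gcongr; exact hθ.2)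
    exact_mod_cast lt_of_mul_lt_mul_right this pi_pos.le
  exact ⟨j, hjn, (mem_Ioo_sinNode_iff hn).mpr ⟨hlo, by linarith⟩⟩

lemma eq_of_mem_Ioo_sinNode (hj : θ ∈ Set.Ioo (sinNode n j) (sinNode n (j + 1)))
    (hk : θ ∈ Set.Ioo (sinNode n k) (sinNode n (k + 1))) : j = k := by
  by_contra hjk
  rcases Nat.lt_or_gt_of_ne hjk with h | h
  · exact (hj.2.trans_le ((sinNode_mono n h).trans hk.1.le)).false
  · exact (hk.2.trans_le ((sinNode_mono n h).trans hj.1.le)).false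

end SinNode

def oddPairs (n : ℕ) : Finset (ℕ × ℕ) :=
  (Finset.range n ×ˢ Finset.range n).filter fun q => Odd (q.1 + q.2)

lemma sum_oddPairs_mul (a : ℕ → ℝ) (n : ℕ) :
    ∑ q ∈ oddPairs n, a q.1 * a q.2 =
      ((∑ j ∈ Finset.range n, a j) ^ 2 - (∑ j ∈ Finset.range n, (-1) ^ j * a j) ^ 2) / 2 := by
  have hodd : ∀ m : ℕ, ∀ x : ℝ, (if Odd m then x else 0) = (x - (-1) ^ m * x) / 2 := by
    intro m x
    rcases m.even_or_odd with hm | hm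
    · simp [hm.neg_one_pow, Nat.not_odd_iff_even.mpr hm]
    · simp [hm.neg_one_pow, hm]
  rw [oddPairs, Finset.sum_filter, sq, sq, Finset.sum_mul_sum, Finset.sum_mul_sum,
    ← Finset.sum_product', ← Finset.sum_product', ← Finset.sum_sub_distrib, Finset.sum_div]
  refine Finset.sum_congr rfl fun q _ => ?_
  rw [hodd, pow_add]
  ring

section SinNodeSums

variable {n : ℕ}

lemma sum_satoTate_sinNode (hn : 0 < n) :
    ∑ j ∈ Finset.range n, satoTate (sinNode n j) (sinNode n (j + 1)) = 1 := by
  rw [sum_satoTate_adjacent, sinNode_self hn.ne', sinNode, Nat.cast_zero, zero_mul, zero_div,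
    satoTate_zero_pi]

lemma sum_neg_one_pow_mul_satoTate_sinNode (hn : Even n) :
    ∑ j ∈ Finset.range n, (-1) ^ j * satoTate (sinNode n j) (sinNode n (j + 1)) = 0 := by
  set f : ℕ → ℝ := fun j => (-1) ^ j * satoTate (sinNode n j) (sinNode n (j + 1))
  have hreflect : ∀ j ∈ Finset.range n, f (n - 1 - j) = -f j := by
    intro j hj
    rw [Finset.mem_range] at hj
    have hsign : (-1 : ℝ) ^ (n - 1 - j) = -(-1) ^ j := by
      rcases j.even_or_odd with hj' | hj'
      · rw [hj'.neg_one_pow, Odd.neg_one_pow (by grind)]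
      · rw [hj'.neg_one_pow, Even.neg_one_pow (by grind), neg_neg]
    simp only [f, hsign, satoTate_sinNode_reflect hj, neg_mul]
  have := Finset.sum_range_reflect f n
  rw [Finset.sum_congr rfl hreflect, Finset.sum_neg_distrib] at this
  linarith

lemma sum_oddPairs_satoTate_sinNode (hn₀ : 0 < n) (hn : Even n) :
    ∑ q ∈ oddPairs n, satoTate (sinNode n q.1) (sinNode n (q.1 + 1)) *
      satoTate (sinNode n q.2) (sinNode n (q.2 + 1)) = 1 / 2 := by
  rw [sum_oddPairs_mul (fun j => satoTate (sinNode n j) (sinNode n (j + 1))),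
    sum_satoTate_sinNode hn₀, sum_neg_one_pow_mul_satoTate_sinNode hn]
  norm_num

end SinNodeSums

lemma sin_mul_sin_neg_iff {n : ℕ} {θ₁ θ₂ : ℝ} (hn : 0 < n) (hθ₁ : θ₁ ∈ Set.Icc 0 π)
    (hθ₂ : θ₂ ∈ Set.Icc 0 π) :
    sin (n * θ₁) * sin (n * θ₂) < 0 ↔ ∃ q ∈ oddPairs n,
      θ₁ ∈ Set.Ioo (sinNode n q.1) (sinNode n (q.1 + 1)) ∧
      θ₂ ∈ Set.Ioo (sinNode n q.2) (sinNode n (q.2 + 1)) := by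
  have hsign : ∀ j k, θ₁ ∈ Set.Ioo (sinNode n j) (sinNode n (j + 1)) →
      θ₂ ∈ Set.Ioo (sinNode n k) (sinNode n (k + 1)) →
      0 < (-1) ^ (j + k) * (sin (n * θ₁) * sin (n * θ₂)) := fun j k hj hk => by
    have := mul_pos (neg_one_pow_mul_sin_pos hn hj) (neg_one_pow_mul_sin_pos hn hk)
    rwa [pow_add, mul_mul_mul_comm]
  simp only [oddPairs, Finset.mem_filter, Finset.mem_product, Finset.mem_range]
  constructor
  · intro hneg
    obtain ⟨j, hjn, hj⟩ := exists_mem_Ioo_sinNode hn hθ₁ (left_ne_zero_of_mul hneg.ne)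
    obtain ⟨k, hkn, hk⟩ := exists_mem_Ioo_sinNode hn hθ₂ (right_ne_zero_of_mul hneg.ne)
    refine ⟨(j, k), ⟨⟨hjn, hkn⟩, Nat.not_even_iff_odd.mp fun heven => ?_⟩, hj, hk⟩
    have := hsign j k hj hk
    rw [heven.neg_one_pow, one_mul] at this
    linarith
  · rintro ⟨⟨j, k⟩, ⟨-, hodd⟩, hj, hk⟩
    have := hsign j k hj hk
    rw [hodd.neg_one_pow] at this
    linarith

lemma IsPairSatoTate.hasPrimeDensity_sin_mul_sin_neg {θ₁ θ₂ : ℕ → ℝ} (h : IsPairSatoTate θ₁ θ₂)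
    (hθ₁ : ∀ p : ℕ, p.Prime → θ₁ p ∈ Set.Icc 0 π) (hθ₂ : ∀ p : ℕ, p.Prime → θ₂ p ∈ Set.Icc 0 π)
    {n : ℕ} (hn₀ : 0 < n) (hn : Even n) :
    HasPrimeDensity (fun p => sin (n * θ₁ p) * sin (n * θ₂ p) < 0) (1 / 2) := by
  set rect : ℕ × ℕ → ℕ → Prop := fun q p =>
    θ₁ p ∈ Set.Ioo (sinNode n q.1) (sinNode n (q.1 + 1)) ∧
      θ₂ p ∈ Set.Ioo (sinNode n q.2) (sinNode n (q.2 + 1))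
  have hrect : ∀ q ∈ oddPairs n, HasPrimeDensity (rect q)
      (satoTate (sinNode n q.1) (sinNode n (q.1 + 1)) *
        satoTate (sinNode n q.2) (sinNode n (q.2 + 1))) := by
    intro q hq
    simp only [oddPairs, Finset.mem_filter, Finset.mem_product, Finset.mem_range] at hq
    exact h.hasPrimeDensity_Ioo hθ₁ hθ₂ (sinNode_nonneg n _) (sinNode_mono n q.1.le_succ)
      (sinNode_le_pi hq.1.1) (sinNode_nonneg n _) (sinNode_mono n q.2.le_succ)
      (sinNode_le_pi hq.1.2)
  have hdisj : ∀ q ∈ oddPairs n, ∀ q' ∈ oddPairs n, q ≠ q' → ∀ p, p.Prime →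
      rect q p → ¬ rect q' p := fun q _ q' _ hqq' p _ hq hq' =>
    hqq' (Prod.ext (eq_of_mem_Ioo_sinNode hq.1 hq'.1) (eq_of_mem_Ioo_sinNode hq.2 hq'.2))
  have hunion := HasPrimeDensity.exists_mem_finset hdisj hrect
  rw [sum_oddPairs_satoTate_sinNode hn₀ hn] at hunion
  exact hunion.congr fun p hp => (sin_mul_sin_neg_iff hn₀ (hθ₁ p hp) (hθ₂ p hp)).symm

theorem pair_sign_density_neg_general
    (θ₁ θ₂ : ℕ → ℝ)
    (hθ₁ : ∀ p : ℕ, p.Prime → θ₁ p ∈ Set.Icc 0 π)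
    (hθ₂ : ∀ p : ℕ, p.Prime → θ₂ p ∈ Set.Icc 0 π)
    (hequi : ∀ a₁ b₁ a₂ b₂ : ℝ,
      0 ≤ a₁ → a₁ ≤ b₁ → b₁ ≤ π → 0 ≤ a₂ → a₂ ≤ b₂ → b₂ ≤ π →
      Tendsto (fun x : ℕ =>
        (Nat.card {p : ℕ | p ≤ x ∧ p.Prime ∧
          θ₁ p ∈ Set.Icc a₁ b₁ ∧ θ₂ p ∈ Set.Icc a₂ b₂} : ℝ) /
        (Nat.card {p : ℕ | p ≤ x ∧ p.Prime} : ℝ)) atTop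
        (nhds ((4 / π ^ 2) *
          ∫ t₁ in Set.Icc a₁ b₁, ∫ t₂ in Set.Icc a₂ b₂,
            Real.sin t₁ ^ 2 * Real.sin t₂ ^ 2)))
    (ν : ℕ) (hν : Odd ν) :
    Tendsto (fun x : ℕ =>
      (Nat.card {p : ℕ | p ≤ x ∧ p.Prime ∧
        Real.sin (((ν : ℝ) + 1) * θ₁ p) * Real.sin (((ν : ℝ) + 1) * θ₂ p) < 0} : ℝ) /
      (Nat.card {p : ℕ | p ≤ x ∧ p.Prime} : ℝ)) atTop (nhds (1 / 2)) := by
  rw [show (ν : ℝ) + 1 = ((ν + 1 : ℕ) : ℝ) by push_cast; rfl]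
  exact IsPairSatoTate.hasPrimeDensity_sin_mul_sin_neg hequi hθ₁ hθ₂ ν.succ_pos hν.add_one

/-- Analytic core of Theorem 1.2 (positive case): under pair Sato-Tate equidistribution of
the angles, primes `p` with `sin((ν+1)θ₁(p))·sin((ν+1)θ₂(p)) < 0` have natural density `1/2`. -/
theorem pair_sign_density_neg
    (θ₁ θ₂ : ℕ → ℝ)
    (hθ₁ : ∀ p : ℕ, p.Prime → θ₁ p ∈ Set.Icc 0 π)
    (hθ₂ : ∀ p : ℕ, p.Prime → θ₂ p ∈ Set.Icc 0 π)
    (hequi : ∀ a₁ b₁ a₂ b₂ : ℝ,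
      0 ≤ a₁ → a₁ ≤ b₁ → b₁ ≤ π → 0 ≤ a₂ → a₂ ≤ b₂ → b₂ ≤ π →
      Tendsto (fun x : ℕ =>
        (Nat.card {p : ℕ | p ≤ x ∧ p.Prime ∧
          θ₁ p ∈ Set.Icc a₁ b₁ ∧ θ₂ p ∈ Set.Icc a₂ b₂} : ℝ) /
        (Nat.card {p : ℕ | p ≤ x ∧ p.Prime} : ℝ)) atTop
        (nhds ((4 / π ^ 2) *
          ∫ t₁ in Set.Icc a₁ b₁, ∫ t₂ in Set.Icc a₂ b₂,
            Real.sin t₁ ^ 2 * Real.sin t₂ ^ 2)))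
    (ν : ℕ) (hν : Odd ν) (hν' : 0 < ν) :
    Tendsto (fun x : ℕ =>
      (Nat.card {p : ℕ | p ≤ x ∧ p.Prime ∧
        Real.sin (((ν : ℝ) + 1) * θ₁ p) * Real.sin (((ν : ℝ) + 1) * θ₂ p) < 0} : ℝ) /
      (Nat.card {p : ℕ | p ≤ x ∧ p.Prime} : ℝ)) atTop (nhds (1 / 2)) :=
  pair_sign_density_neg_general θ₁ θ₂ hθ₁ hθ₂ hequi ν hν
end

section
/- Let θ₁, θ₂ be functions from the set of primes to [0, π] whose pairs are equidistributed with respect to the 2-product Sato-Tate measure, i.e. for all subintervals I₁, I₂ ⊆ [0, π], lim_{x→∞} #{p prime, p ≤ x : (θ₁(p), θ₂(p)) ∈ I₁ × I₂} / #{p prime, p ≤ x} = (4/π²)·∫_{I₁}∫_{I₂} sin²(t₁) sin²(t₂) dt₂ dt₁. Let ν be a positive odd integer. Then there exist infinitely many primes p with sin((ν+1)θ₁(p))·sin((ν+1)θ₂(p)) > 0 and infinitely many primes p with sin((ν+1)θ₁(p))·sin((ν+1)θ₂(p)) < 0. -/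
open Real Filter MeasureTheory Set

/-! With `m = ν + 1`, `sin (m t)` is positive on `[δ, 2δ]` and negative on `[4δ, 5δ]`, where
`δ = π / (3m)`; for `m ≥ 2` both intervals lie in `[0, π]`. A box of positive width has positive
Sato–Tate mass, and a positive proportion of the primes up to `x` cannot come from finitely many
primes since the prime count is unbounded. Hence the boxes `[δ, 2δ]²` and `[δ, 2δ] × [4δ, 5δ]`
each contain `(θ₁ p, θ₂ p)` for infinitely many primes `p`. -/

theorem Set.infinite_of_tendsto_card_le_div {s : Set ℕ} {g : ℕ → ℝ} {c : ℝ}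
    (hg : Tendsto g atTop atTop) (hc : c ≠ 0)
    (hs : Tendsto (fun x => (Nat.card {p | p ≤ x ∧ p ∈ s} : ℝ) / g x) atTop (nhds c)) :
    s.Infinite := by
  intro hfin
  obtain ⟨N, hN⟩ := hfin.bddAbove
  have hcard :
      (fun x => (Nat.card {p | p ≤ x ∧ p ∈ s} : ℝ)) =ᶠ[atTop] fun _ => (Nat.card s : ℝ) := by
    filter_upwards [eventually_ge_atTop N] with x hx
    congr 3
    exact Set.ext fun p => and_iff_right_of_imp fun hp => (hN hp).trans hx
  have hzero := (tendsto_const_nhds.congr' hcard.symm).div_atTop hg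
  exact hc (tendsto_nhds_unique hs hzero)

theorem Nat.card_setOf_le_prime (x : ℕ) :
    Nat.card {p : ℕ | p ≤ x ∧ p.Prime} = Nat.primeCounting x := by
  have hset : {p : ℕ | p ≤ x ∧ p.Prime} = ↑(Nat.primesLE x) :=
    Set.ext fun _ => Nat.mem_primesLE.symm
  rw [hset, Nat.card_coe_set_eq, Set.ncard_coe_finset, Nat.primesLE_card_eq_primeCounting]

theorem Nat.tendsto_card_setOf_le_prime :
    Tendsto (fun x => (Nat.card {p : ℕ | p ≤ x ∧ p.Prime} : ℝ)) atTop atTop := by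
  simp only [Nat.card_setOf_le_prime]
  exact tendsto_natCast_atTop_atTop.comp Nat.tendsto_primeCounting

theorem integral_Icc_sin_sq_pos {a b : ℝ} (ha : 0 ≤ a) (hab : a < b) (hb : b ≤ π) :
    0 < ∫ t in Icc a b, sin t ^ 2 := by
  rw [integral_Icc_eq_integral_Ioc, ← intervalIntegral.integral_of_le hab.le]
  refine intervalIntegral.intervalIntegral_pos_of_pos_on
    ((continuous_sin.pow 2).intervalIntegrable a b) (fun t ht => ?_) hab
  exact pow_pos (sin_pos_of_pos_of_lt_pi (ha.trans_lt ht.1) (ht.2.trans_le hb)) 2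

theorem integral_Icc_sin_sq_mul_sin_sq_pos {a₁ b₁ a₂ b₂ : ℝ}
    (ha₁ : 0 ≤ a₁) (hab₁ : a₁ < b₁) (hb₁ : b₁ ≤ π)
    (ha₂ : 0 ≤ a₂) (hab₂ : a₂ < b₂) (hb₂ : b₂ ≤ π) :
    0 < ∫ t₁ in Icc a₁ b₁, ∫ t₂ in Icc a₂ b₂, sin t₁ ^ 2 * sin t₂ ^ 2 := by
  simp_rw [integral_const_mul]
  rw [integral_mul_const]
  exact mul_pos (integral_Icc_sin_sq_pos ha₁ hab₁ hb₁) (integral_Icc_sin_sq_pos ha₂ hab₂ hb₂)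

def PairSatoTateEquidistributed (θ₁ θ₂ : ℕ → ℝ) : Prop :=
  ∀ a₁ b₁ a₂ b₂ : ℝ,
    0 ≤ a₁ → a₁ ≤ b₁ → b₁ ≤ π → 0 ≤ a₂ → a₂ ≤ b₂ → b₂ ≤ π →
    Tendsto (fun x : ℕ =>
      (Nat.card {p : ℕ | p ≤ x ∧ p.Prime ∧ θ₁ p ∈ Icc a₁ b₁ ∧ θ₂ p ∈ Icc a₂ b₂} : ℝ) /
        (Nat.card {p : ℕ | p ≤ x ∧ p.Prime} : ℝ)) atTop
      (nhds ((4 / π ^ 2) * ∫ t₁ in Icc a₁ b₁, ∫ t₂ in Icc a₂ b₂, sin t₁ ^ 2 * sin t₂ ^ 2))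

theorem PairSatoTateEquidistributed.infinite_setOf_prime_mem_Icc {θ₁ θ₂ : ℕ → ℝ}
    (h : PairSatoTateEquidistributed θ₁ θ₂) {a₁ b₁ a₂ b₂ : ℝ}
    (ha₁ : 0 ≤ a₁) (hab₁ : a₁ < b₁) (hb₁ : b₁ ≤ π)
    (ha₂ : 0 ≤ a₂) (hab₂ : a₂ < b₂) (hb₂ : b₂ ≤ π) :
    {p | p.Prime ∧ θ₁ p ∈ Icc a₁ b₁ ∧ θ₂ p ∈ Icc a₂ b₂}.Infinite := by
  refine infinite_of_tendsto_card_le_div Nat.tendsto_card_setOf_le_prime (mul_pos ?_ ?_).ne'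
    (h a₁ b₁ a₂ b₂ ha₁ hab₁.le hb₁ ha₂ hab₂.le hb₂)
  · positivity
  · exact integral_Icc_sin_sq_mul_sin_sq_pos ha₁ hab₁ hb₁ ha₂ hab₂ hb₂

theorem sin_mul_pos_of_mem_Icc {m a b t : ℝ} (hm : 0 ≤ m) (ha : 0 < m * a) (hb : m * b < π)
    (ht : t ∈ Icc a b) : 0 < sin (m * t) :=
  sin_pos_of_pos_of_lt_pi (ha.trans_le (mul_le_mul_of_nonneg_left ht.1 hm))
    ((mul_le_mul_of_nonneg_left ht.2 hm).trans_lt hb)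

theorem sin_mul_neg_of_mem_Icc {m a b t : ℝ} (hm : 0 ≤ m) (ha : π < m * a)
    (hb : m * b < 2 * π) (ht : t ∈ Icc a b) : sin (m * t) < 0 := by
  rw [← neg_pos, ← sin_sub_pi]
  exact sin_pos_of_pos_of_lt_pi (by linarith [mul_le_mul_of_nonneg_left ht.1 hm])
    (by linarith [mul_le_mul_of_nonneg_left ht.2 hm])

theorem pair_sign_changes_infinitely_general
    (θ₁ θ₂ : ℕ → ℝ)
    (hequi : ∀ a₁ b₁ a₂ b₂ : ℝ,
      0 ≤ a₁ → a₁ ≤ b₁ → b₁ ≤ π → 0 ≤ a₂ → a₂ ≤ b₂ → b₂ ≤ π →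
      Tendsto (fun x : ℕ =>
        (Nat.card {p : ℕ | p ≤ x ∧ p.Prime ∧
          θ₁ p ∈ Set.Icc a₁ b₁ ∧ θ₂ p ∈ Set.Icc a₂ b₂} : ℝ) /
        (Nat.card {p : ℕ | p ≤ x ∧ p.Prime} : ℝ)) atTop
        (nhds ((4 / π ^ 2) *
          ∫ t₁ in Set.Icc a₁ b₁, ∫ t₂ in Set.Icc a₂ b₂,
            Real.sin t₁ ^ 2 * Real.sin t₂ ^ 2)))
    (ν : ℕ) (hν' : 0 < ν) :
    {p : ℕ | p.Prime ∧
      0 < Real.sin (((ν : ℝ) + 1) * θ₁ p) * Real.sin (((ν : ℝ) + 1) * θ₂ p)}.Infinite ∧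
    {p : ℕ | p.Prime ∧
      Real.sin (((ν : ℝ) + 1) * θ₁ p) * Real.sin (((ν : ℝ) + 1) * θ₂ p) < 0}.Infinite := by
  set m : ℝ := ν + 1
  have hm : 2 ≤ m := by
    have : (1 : ℝ) ≤ ν := by exact_mod_cast hν'
    linarith
  set δ : ℝ := π / (3 * m)
  have hmδ : m * δ = π / 3 := by
    simp only [δ]
    field_simp
  have hδ : 0 < δ := by positivity
  have hδπ : 5 * δ ≤ π := by nlinarith [pi_pos]
  have hpos : ∀ t ∈ Icc δ (2 * δ), 0 < sin (m * t) := fun t =>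
    sin_mul_pos_of_mem_Icc (by positivity) (by linarith [pi_pos]) (by linarith [pi_pos])
  have hneg : ∀ t ∈ Icc (4 * δ) (5 * δ), sin (m * t) < 0 := fun t =>
    sin_mul_neg_of_mem_Icc (by positivity) (by linarith [pi_pos]) (by linarith [pi_pos])
  have hST : PairSatoTateEquidistributed θ₁ θ₂ := hequi
  constructor
  · refine (hST.infinite_setOf_prime_mem_Icc (a₁ := δ) (b₁ := 2 * δ) (a₂ := δ) (b₂ := 2 * δ)
      hδ.le (by linarith) (by linarith) hδ.le (by linarith) (by linarith)).mono ?_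
    exact fun p ⟨hp, h₁, h₂⟩ => ⟨hp, mul_pos (hpos _ h₁) (hpos _ h₂)⟩
  · refine (hST.infinite_setOf_prime_mem_Icc (a₁ := δ) (b₁ := 2 * δ) (a₂ := 4 * δ) (b₂ := 5 * δ)
      hδ.le (by linarith) (by linarith) (by linarith) (by linarith) hδπ).mono ?_
    exact fun p ⟨hp, h₁, h₂⟩ => ⟨hp, mul_neg_of_pos_of_neg (hpos _ h₁) (hneg _ h₂)⟩

/-- Analytic core of Theorem 1.2 (positive case): under pair Sato-Tate equidistribution of
the angles, there are infinitely many primes of each sign of `sin((ν+1)θ₁(p))·sin((ν+1)θ₂(p))`. -/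
theorem pair_sign_changes_infinitely
    (θ₁ θ₂ : ℕ → ℝ)
    (hθ₁ : ∀ p : ℕ, p.Prime → θ₁ p ∈ Set.Icc 0 π)
    (hθ₂ : ∀ p : ℕ, p.Prime → θ₂ p ∈ Set.Icc 0 π)
    (hequi : ∀ a₁ b₁ a₂ b₂ : ℝ,
      0 ≤ a₁ → a₁ ≤ b₁ → b₁ ≤ π → 0 ≤ a₂ → a₂ ≤ b₂ → b₂ ≤ π →
      Tendsto (fun x : ℕ =>
        (Nat.card {p : ℕ | p ≤ x ∧ p.Prime ∧
          θ₁ p ∈ Set.Icc a₁ b₁ ∧ θ₂ p ∈ Set.Icc a₂ b₂} : ℝ) /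
        (Nat.card {p : ℕ | p ≤ x ∧ p.Prime} : ℝ)) atTop
        (nhds ((4 / π ^ 2) *
          ∫ t₁ in Set.Icc a₁ b₁, ∫ t₂ in Set.Icc a₂ b₂,
            Real.sin t₁ ^ 2 * Real.sin t₂ ^ 2)))
    (ν : ℕ) (hν : Odd ν) (hν' : 0 < ν) :
    {p : ℕ | p.Prime ∧
      0 < Real.sin (((ν : ℝ) + 1) * θ₁ p) * Real.sin (((ν : ℝ) + 1) * θ₂ p)}.Infinite ∧
    {p : ℕ | p.Prime ∧
      Real.sin (((ν : ℝ) + 1) * θ₁ p) * Real.sin (((ν : ℝ) + 1) * θ₂ p) < 0}.Infinite :=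
  pair_sign_changes_infinitely_general θ₁ θ₂ hequi ν hν'
end
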